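/- arXiv:2008.08047 — 2 statements merged into one kernel-verified Lean document; each statement's English description precedes it below -/
import Mathlib

section
/- Let L be a linear subspace of the space of symmetric n×n real matrices, with orthogonal complement L^⊥ relative to the trace inner product ⟨A,B⟩ = tr(A·B). Let X and Y be symmetric positive definite n×n matrices and k > 0 with X − k·Y ∈ L and X⁻¹ − k·Y⁻¹ ∈ L^⊥, and let μ₁, …, μ_n be the eigenvalues (with multiplicity) of Y^(-1/2)·X·Y^(-1/2). Then Σ_{i=1}^n (log μ_i)² ≤ 2n·(cosh(log k) − 1). -/
open Matrix

open scoped ComplexOrder in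
/-- The positive semidefinite square root of a positive semidefinite matrix
(Mathlib's former `Matrix.PosSemidef.sqrt`, removed since; restored with its old definition). -/
noncomputable def Matrix.PosSemidef.sqrt {n 𝕜 : Type*} [Fintype n] [DecidableEq n] [RCLike 𝕜]
    {A : Matrix n n 𝕜} (hA : A.PosSemidef) : Matrix n n 𝕜 :=
  hA.1.eigenvectorUnitary.1 * diagonal ((↑) ∘ (√·) ∘ hA.1.eigenvalues) *
  (star hA.1.eigenvectorUnitary : Matrix n n 𝕜)

/-! With `S = Y^(1/2)` and `A = S⁻¹ X S⁻¹`, whose eigenvalues are the `μᵢ`, we have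
`tr A = tr (X Y⁻¹)` and `tr A⁻¹ = tr (Y X⁻¹)`. Expanding the orthogonality
`tr ((X - k Y) (X⁻¹ - k Y⁻¹)) = 0` gives `tr A + tr A⁻¹ = n (k + k⁻¹)`, that is
`∑ cosh (log μᵢ) = n cosh (log k)`, and the claim follows by summing the scalar inequality
`x² ≤ 2 (cosh x - 1)` at `x = log μᵢ`. -/

namespace Real

theorem sq_le_two_mul_cosh_sub_one (x : ℝ) : x ^ 2 ≤ 2 * (cosh x - 1) := by
  have hsinh : (x / 2) ^ 2 ≤ sinh (x / 2) ^ 2 := by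
    rw [← sq_abs, ← sq_abs (sinh _), abs_sinh]
    exact pow_le_pow_left₀ (abs_nonneg _) (self_le_sinh_iff.mpr (abs_nonneg _)) 2
  have hcosh : cosh x = 1 + 2 * sinh (x / 2) ^ 2 := by
    have := cosh_two_mul (x / 2)
    rw [mul_div_cancel₀ x two_ne_zero, cosh_sq] at this
    linarith
  nlinarith

theorem sq_log_le_add_inv_sub_two {t : ℝ} (ht : 0 < t) : log t ^ 2 ≤ t + t⁻¹ - 2 := by
  have := sq_le_two_mul_cosh_sub_one (log t)
  rwa [cosh_log ht, mul_sub, mul_div_cancel₀ _ two_ne_zero, mul_one] at this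

end Real

namespace Matrix

variable {n : Type*} [Fintype n] [DecidableEq n]

section CommRing

variable {R : Type*}

theorem trace_inv_mul_mul_inv [CommRing R] (S X : Matrix n n R) :
    (S⁻¹ * X * S⁻¹).trace = (X * (S * S)⁻¹).trace := by
  rw [trace_mul_cycle, trace_mul_comm, Matrix.mul_inv_rev]

theorem trace_inv_of_inv_mul_mul_inv [CommRing R] {S : Matrix n n R} (hS : IsUnit S.det)
    (X : Matrix n n R) : (S⁻¹ * X * S⁻¹)⁻¹.trace = (S * S * X⁻¹).trace := by
  rw [Matrix.mul_inv_rev, Matrix.mul_inv_rev, nonsing_inv_nonsing_inv S hS, ← Matrix.mul_assoc,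
    trace_mul_cycle]

theorem trace_mul_inv_add_trace_mul_inv_eq [Field R] {X Y : Matrix n n R} (hX : IsUnit X.det)
    (hY : IsUnit Y.det) {k : R} (hk : k ≠ 0) (h : ((X - k • Y) * (X⁻¹ - k • Y⁻¹)).trace = 0) :
    (X * Y⁻¹).trace + (Y * X⁻¹).trace = Fintype.card n * (k + k⁻¹) := by
  simp only [sub_mul, mul_sub, smul_mul_assoc, mul_smul_comm, mul_nonsing_inv X hX,
    mul_nonsing_inv Y hY, trace_sub, trace_smul, trace_one, smul_eq_mul] at h
  field_simp
  linear_combination -h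

end CommRing

section RCLike

open scoped ComplexOrder

variable {𝕜 : Type*} [RCLike 𝕜] {A : Matrix n n 𝕜}

theorem PosSemidef.sqrt_eq_cfc (hA : A.PosSemidef) : hA.sqrt = cfc Real.sqrt A := by
  rw [hA.1.cfc_eq, IsHermitian.cfc, Unitary.conjStarAlgAut_apply, PosSemidef.sqrt]

theorem PosSemidef.isHermitian_sqrt (hA : A.PosSemidef) : hA.sqrt.IsHermitian := by
  rw [hA.sqrt_eq_cfc]
  exact cfc_predicate _ _

theorem PosSemidef.sqrt_mul_self (hA : A.PosSemidef) : hA.sqrt * hA.sqrt = A := by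
  have hA' : IsSelfAdjoint A := hA.1
  rw [hA.sqrt_eq_cfc, ← cfc_mul Real.sqrt Real.sqrt A]
  conv_rhs => rw [← cfc_id' ℝ A]
  refine cfc_congr fun x hx => ?_
  rw [hA.1.spectrum_real_eq_range_eigenvalues] at hx
  obtain ⟨i, rfl⟩ := hx
  exact Real.mul_self_sqrt (hA.eigenvalues_nonneg i)

theorem IsHermitian.trace_cfc (hA : A.IsHermitian) (f : ℝ → ℝ) :
    (cfc f A).trace = ∑ i, (f (hA.eigenvalues i) : 𝕜) := by
  rw [hA.cfc_eq, IsHermitian.cfc, Unitary.conjStarAlgAut_apply, trace_mul_cycle,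
    Unitary.coe_star_mul_self, Matrix.one_mul, trace_diagonal]
  rfl

theorem IsHermitian.trace_inv (hA : A.IsHermitian) (h : IsUnit A) :
    A⁻¹.trace = ∑ i, ((hA.eigenvalues i)⁻¹ : 𝕜) := by
  rw [nonsing_inv_eq_ringInverse, ← cfc_ringInverse_id (R := ℝ) A h hA.isSelfAdjoint,
    hA.trace_cfc]
  push_cast
  rfl

theorem PosDef.inv_mul_mul_inv {X S : Matrix n n 𝕜} (hX : X.PosDef) (hS : S.IsHermitian)
    (hdet : IsUnit S.det) : (S⁻¹ * X * S⁻¹).PosDef := by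
  have hstar : star S⁻¹ = S⁻¹ := by rw [star_eq_conjTranspose, conjTranspose_nonsing_inv, hS.eq]
  have hunit : IsUnit S⁻¹ := (isUnit_iff_isUnit_det _).mpr (isUnit_nonsing_inv_det S hdet)
  simpa only [hstar] using (IsUnit.posDef_star_left_conjugate_iff hunit).mpr hX

theorem PosDef.sum_sq_log_eigenvalues_le {A : Matrix n n ℝ} (hA : A.PosDef) :
    ∑ i, Real.log (hA.1.eigenvalues i) ^ 2 ≤ A.trace + A⁻¹.trace - 2 * Fintype.card n := by
  rw [hA.1.trace_eq_sum_eigenvalues, hA.1.trace_inv hA.isUnit]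
  calc ∑ i, Real.log (hA.1.eigenvalues i) ^ 2
      ≤ ∑ i, (hA.1.eigenvalues i + (hA.1.eigenvalues i)⁻¹ - 2) :=
        Finset.sum_le_sum fun i _ => Real.sq_log_le_add_inv_sub_two (hA.eigenvalues_pos i)
    _ = _ := by simp [Finset.sum_add_distrib, Finset.sum_sub_distrib, mul_comm]

end RCLike

end Matrix

theorem geodesic_distance_sq_le_central_path_bound_general
    (n : ℕ)
    (L : Submodule ℝ (Matrix (Fin n) (Fin n) ℝ))
    (Lp : Submodule ℝ (Matrix (Fin n) (Fin n) ℝ))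
    (hLp : ∀ B, B ∈ Lp ↔ (B.IsHermitian ∧ ∀ A ∈ L, (A * B).trace = 0))
    (X Y : Matrix (Fin n) (Fin n) ℝ) (hX : X.PosDef) (hY : Y.PosDef)
    (k : ℝ) (hk : 0 < k)
    (hmemL : X - k • Y ∈ L) (hmemLp : X⁻¹ - k • Y⁻¹ ∈ Lp)
    (hA : ((hY.posSemidef.sqrt)⁻¹ * X * (hY.posSemidef.sqrt)⁻¹).IsHermitian) :
    ∑ i, (Real.log (hA.eigenvalues i)) ^ 2 ≤
      2 * n * (Real.cosh (Real.log k) - 1) := by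
  set S := hY.posSemidef.sqrt
  have hSS : S * S = Y := hY.posSemidef.sqrt_mul_self
  have hS : IsUnit S.det :=
    isUnit_of_mul_isUnit_left (by rw [← det_mul, hSS]; exact hY.det_pos.ne'.isUnit)
  have hApd : (S⁻¹ * X * S⁻¹).PosDef := hX.inv_mul_mul_inv hY.posSemidef.isHermitian_sqrt hS
  have htrace : (S⁻¹ * X * S⁻¹).trace + (S⁻¹ * X * S⁻¹)⁻¹.trace = n * (k + k⁻¹) := by
    have horth := trace_mul_inv_add_trace_mul_inv_eq hX.det_pos.ne'.isUnit
      hY.det_pos.ne'.isUnit hk.ne' (((hLp _).mp hmemLp).2 _ hmemL)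
    rw [trace_inv_mul_mul_inv, trace_inv_of_inv_mul_mul_inv hS, hSS, horth, Fintype.card_fin]
  calc ∑ i, Real.log (hA.eigenvalues i) ^ 2
      ≤ (S⁻¹ * X * S⁻¹).trace + (S⁻¹ * X * S⁻¹)⁻¹.trace - 2 * n := by
        simpa using hApd.sum_sq_log_eigenvalues_le
    _ = 2 * n * (Real.cosh (Real.log k) - 1) := by
        rw [htrace, Real.cosh_log hk]
        ring

/-- μ-update lemma (semidefinite instance): if `L` is a subspace of symmetric
matrices with orthogonal complement `Lp` (for the trace inner product), `X, Y`
are symmetric positive definite, `k > 0`, `X - k•Y ∈ L`, `X⁻¹ - k•Y⁻¹ ∈ Lp`,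
and `μᵢ` are the eigenvalues of `Y^(-1/2) * X * Y^(-1/2)`, then the squared
geodesic distance satisfies `∑ i, (log μᵢ)² ≤ 2 n (cosh (log k) - 1)`. -/
theorem geodesic_distance_sq_le_central_path_bound
    (n : ℕ) (hn : 1 ≤ n)
    (L : Submodule ℝ (Matrix (Fin n) (Fin n) ℝ))
    (hL : ∀ A ∈ L, A.IsHermitian)
    (Lp : Submodule ℝ (Matrix (Fin n) (Fin n) ℝ))
    (hLp : ∀ B, B ∈ Lp ↔ (B.IsHermitian ∧ ∀ A ∈ L, (A * B).trace = 0))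
    (X Y : Matrix (Fin n) (Fin n) ℝ) (hX : X.PosDef) (hY : Y.PosDef)
    (k : ℝ) (hk : 0 < k)
    (hmemL : X - k • Y ∈ L) (hmemLp : X⁻¹ - k • Y⁻¹ ∈ Lp)
    (hA : ((hY.posSemidef.sqrt)⁻¹ * X * (hY.posSemidef.sqrt)⁻¹).IsHermitian) :
    ∑ i, (Real.log (hA.eigenvalues i)) ^ 2 ≤
      2 * n * (Real.cosh (Real.log k) - 1) :=
  geodesic_distance_sq_le_central_path_bound_general n L Lp hLp X Y hX hY k hk hmemL hmemLp hA
end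

section
/- Fix a linear subspace L of the space of symmetric n×n real matrices with orthogonal complement L^⊥ relative to the trace inner product ⟨A,B⟩ = tr(A·B), symmetric matrices X₀, S₀, and μ > 0. Let W and Ŵ be symmetric positive definite with Ŵ ∈ (1/√μ)·X₀ + L and Ŵ⁻¹ ∈ (1/√μ)·S₀ + L^⊥, and let D be symmetric with W^(1/2)·(I + D)·W^(1/2) ∈ (1/√μ)·X₀ + L and W^(-1/2)·(I − D)·W^(-1/2) ∈ (1/√μ)·S₀ + L^⊥. Define f : ℝ → ℝ by f(t) = tr(exp(t·D)·W^(1/2)·Ŵ⁻¹·W^(1/2)) + tr(exp(−t·D)·W^(-1/2)·Ŵ·W^(-1/2)) − 2n. Then f′(0) = −( f(0) + tr(D²) ). -/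
/-!
Write `S = W^(1/2)`, `P = S Ŵ⁻¹ S` and `Q = S⁻¹ Ŵ S⁻¹`. Then `f 0 = tr P + tr Q - 2n` and
`f' 0 = tr (D P) - tr (D Q)`. The Newton conditions put `S (I + D) S - Ŵ` in `L` and
`S⁻¹ (I - D) S⁻¹ - Ŵ⁻¹` in `L^⊥`, so the trace of their product vanishes; by cyclicity of the
trace this orthogonality relation reads `2n - tr D² - tr ((I + D) P) - tr ((I - D) Q) = 0`,
which is `f' 0 = -(f 0 + tr D²)`.
-/

open Matrix

open scoped ComplexOrder

namespace Matrix

variable {ι : Type*} [Fintype ι]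

section Trace

variable {R : Type*} [CommRing R]

theorem trace_conj_mul (S X M : Matrix ι ι R) :
    (S * X * S * M).trace = (X * (S * M * S)).trace := by
  rw [Matrix.mul_assoc, Matrix.mul_assoc, trace_mul_comm]
  simp only [Matrix.mul_assoc]

variable [DecidableEq ι]

theorem trace_conj_mul_conj_inv {S : Matrix ι ι R} (hS : IsUnit S.det) (X Y : Matrix ι ι R) :
    (S * X * S * (S⁻¹ * Y * S⁻¹)).trace = (X * Y).trace := by
  rw [trace_conj_mul]
  simp only [Matrix.mul_assoc, nonsing_inv_mul _ hS, Matrix.mul_one,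
    mul_nonsing_inv_cancel_left _ _ hS]

theorem trace_conj_sub_mul_conj_inv_sub {S C : Matrix ι ι R} (hS : IsUnit S.det)
    (hC : IsUnit C.det) (X Y : Matrix ι ι R) :
    ((S * X * S - C) * (S⁻¹ * Y * S⁻¹ - C⁻¹)).trace =
      (X * Y).trace - (X * (S * C⁻¹ * S)).trace - (Y * (S⁻¹ * C * S⁻¹)).trace + Fintype.card ι := by
  rw [sub_mul, mul_sub, mul_sub, mul_nonsing_inv _ hC, trace_sub, trace_sub, trace_sub, trace_one,
    trace_conj_mul_conj_inv hS, trace_conj_mul, trace_mul_comm C, trace_conj_mul S⁻¹]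
  ring

end Trace

variable [DecidableEq ι]

theorem PosSemidef.sqrt_mul_sqrt {𝕜 : Type*} [RCLike 𝕜] {A : Matrix ι ι 𝕜} (hA : A.PosSemidef) :
    hA.sqrt * hA.sqrt = A := by
  set U : Matrix ι ι 𝕜 := (hA.1.eigenvectorUnitary : Matrix ι ι 𝕜)
  have hU : star U * U = 1 := Unitary.coe_star_mul_self _
  conv_rhs => rw [hA.1.spectral_theorem, Unitary.conjStarAlgAut_apply]
  calc hA.sqrt * hA.sqrt
      = U * (diagonal ((↑) ∘ (√·) ∘ hA.1.eigenvalues) * (star U * U) *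
          diagonal ((↑) ∘ (√·) ∘ hA.1.eigenvalues)) * star U := by
        simp only [PosSemidef.sqrt, U, Matrix.mul_assoc]
    _ = _ := by
        rw [hU, Matrix.mul_one, diagonal_mul_diagonal]
        congr 3
        funext i
        simp [← RCLike.ofReal_mul, Real.mul_self_sqrt (hA.eigenvalues_nonneg i)]

theorem PosDef.isUnit_det_sqrt {𝕜 : Type*} [RCLike 𝕜] {A : Matrix ι ι 𝕜} (hA : A.PosDef) :
    IsUnit hA.posSemidef.sqrt.det := by
  have h : IsUnit (hA.posSemidef.sqrt.det * hA.posSemidef.sqrt.det) := by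
    rw [← det_mul, hA.posSemidef.sqrt_mul_sqrt, ← isUnit_iff_isUnit_det]
    exact hA.isUnit
  exact isUnit_of_mul_isUnit_left h

open scoped Norms.Operator in
theorem hasDerivAt_trace_exp_smul_mul (D P : Matrix ι ι ℝ) (t : ℝ) :
    HasDerivAt (fun u : ℝ => (NormedSpace.exp (u • D) * P).trace)
      (D * NormedSpace.exp (t • D) * P).trace t :=
  ((traceLinearMap ι ℝ ℝ).toContinuousLinearMap.hasFDerivAt.comp_hasDerivAt t
    ((hasDerivAt_exp_smul_const' D t).mul_const P))

end Matrix

theorem deriv_divergence_newton_direction_general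
    (n : ℕ)
    (L : Submodule ℝ (Matrix (Fin n) (Fin n) ℝ))
    (Lp : Submodule ℝ (Matrix (Fin n) (Fin n) ℝ))
    (hLp : ∀ B, B ∈ Lp ↔ (B.IsHermitian ∧ ∀ A ∈ L, (A * B).trace = 0))
    (X₀ S₀ : Matrix (Fin n) (Fin n) ℝ)
    (μ : ℝ)
    (W Wc : Matrix (Fin n) (Fin n) ℝ) (hW : W.PosDef) (hWc : Wc.PosDef)
    (hWc1 : Wc - (1 / Real.sqrt μ) • X₀ ∈ L)
    (hWc2 : Wc⁻¹ - (1 / Real.sqrt μ) • S₀ ∈ Lp)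
    (D : Matrix (Fin n) (Fin n) ℝ)
    (hD1 : hW.posSemidef.sqrt * (1 + D) * hW.posSemidef.sqrt
            - (1 / Real.sqrt μ) • X₀ ∈ L)
    (hD2 : (hW.posSemidef.sqrt)⁻¹ * (1 - D) * (hW.posSemidef.sqrt)⁻¹
            - (1 / Real.sqrt μ) • S₀ ∈ Lp)
    (f : ℝ → ℝ)
    (hf : ∀ t : ℝ, f t =
      (NormedSpace.exp (t • D) * (hW.posSemidef.sqrt * Wc⁻¹ * hW.posSemidef.sqrt)).trace +
        (NormedSpace.exp ((-t) • D) *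
          ((hW.posSemidef.sqrt)⁻¹ * Wc * (hW.posSemidef.sqrt)⁻¹)).trace - 2 * n) :
    deriv f 0 = -(f 0 + (D * D).trace) := by
  have hS := hW.isUnit_det_sqrt
  generalize hW.posSemidef.sqrt = S at hS hD1 hD2 hf
  have horth : ((S * (1 + D) * S - Wc) * (S⁻¹ * (1 - D) * S⁻¹ - Wc⁻¹)).trace = 0 :=
    ((hLp _).mp (by simpa using Lp.sub_mem hD2 hWc2)).2 _ (by simpa using L.sub_mem hD1 hWc1)
  rw [trace_conj_sub_mul_conj_inv_sub hS ((isUnit_iff_isUnit_det _).mp hWc.isUnit)] at horth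
  have hf_eq : f = fun t => (NormedSpace.exp (t • D) * (S * Wc⁻¹ * S)).trace +
      (NormedSpace.exp (t • -D) * (S⁻¹ * Wc * S⁻¹)).trace - 2 * n := by
    funext t
    rw [hf, neg_smul, smul_neg]
  have hderiv : HasDerivAt f _ 0 := hf_eq ▸ ((hasDerivAt_trace_exp_smul_mul D _ 0).add
    (hasDerivAt_trace_exp_smul_mul (-D) _ 0)).sub_const _
  rw [hderiv.deriv, hf 0]
  simp only [add_mul, sub_mul, mul_sub, one_mul, trace_add, trace_sub, trace_one, zero_smul,
    NormedSpace.exp_zero, mul_one, neg_zero, Fintype.card_fin, neg_mul, trace_neg] at horth ⊢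
  linarith

/-- Derivative of the divergence along the Newton direction: if `Wc` is the
scaled centered point for `μ` and `D` the Newton direction at `(W, μ)`, then
the divergence `f t` along the geodesic through `W` with direction `D`
satisfies `f'(0) = -(f(0) + tr (D²))`. -/
theorem deriv_divergence_newton_direction
    (n : ℕ) (hn : 1 ≤ n)
    (L : Submodule ℝ (Matrix (Fin n) (Fin n) ℝ))
    (hL : ∀ A ∈ L, A.IsHermitian)
    (Lp : Submodule ℝ (Matrix (Fin n) (Fin n) ℝ))
    (hLp : ∀ B, B ∈ Lp ↔ (B.IsHermitian ∧ ∀ A ∈ L, (A * B).trace = 0))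
    (X₀ S₀ : Matrix (Fin n) (Fin n) ℝ) (hX₀ : X₀.IsHermitian) (hS₀ : S₀.IsHermitian)
    (μ : ℝ) (hμ : 0 < μ)
    (W Wc : Matrix (Fin n) (Fin n) ℝ) (hW : W.PosDef) (hWc : Wc.PosDef)
    (hWc1 : Wc - (1 / Real.sqrt μ) • X₀ ∈ L)
    (hWc2 : Wc⁻¹ - (1 / Real.sqrt μ) • S₀ ∈ Lp)
    (D : Matrix (Fin n) (Fin n) ℝ) (hD : D.IsHermitian)
    (hD1 : hW.posSemidef.sqrt * (1 + D) * hW.posSemidef.sqrt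
            - (1 / Real.sqrt μ) • X₀ ∈ L)
    (hD2 : (hW.posSemidef.sqrt)⁻¹ * (1 - D) * (hW.posSemidef.sqrt)⁻¹
            - (1 / Real.sqrt μ) • S₀ ∈ Lp)
    (f : ℝ → ℝ)
    (hf : ∀ t : ℝ, f t =
      (NormedSpace.exp (t • D) * (hW.posSemidef.sqrt * Wc⁻¹ * hW.posSemidef.sqrt)).trace +
        (NormedSpace.exp ((-t) • D) *
          ((hW.posSemidef.sqrt)⁻¹ * Wc * (hW.posSemidef.sqrt)⁻¹)).trace - 2 * n) :
    deriv f 0 = -(f 0 + (D * D).trace) :=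
  deriv_divergence_newton_direction_general n L Lp hLp X₀ S₀ μ W Wc hW hWc hWc1 hWc2 D hD1 hD2 f hf
end
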